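/- Let G be a D-regular Bonnet-Myers sharp graph of diameter L, x_0 ~ x_1 ~ ... ~ x_L a full-length geodesic from a pole x_0, and T_j : B_1(x_{j−1}) → B_1(x_j) good optimal transport maps lying on a transport geodesic from x_0 (composed with T_1, ..., T_{j−1}). Then for every v ∈ B_1(x_{j−1}) in the image of T_{j−1}∘...∘T_1 on B_1(x_0), the vertex v lies on a geodesic from x_0 to T_j(v), i.e. d(x_0, v) + d(v, T_j(v)) = d(x_0, T_j(v)). Consequently, if d(x_0,v) = m and d(x_0,T_j(v)) = n, then j−2 ≤ m ≤ n ≤ j+1, d(v, T_j(v)) = n − m, n = m iff v = T_j(v), and n = m+1 iff v ~ T_j(v). -/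

import Mathlib

open Finset

namespace BMS

open scoped Classical

variable {V : Type*}

/-- The uniform probability measure on the closed 1-ball of `x` in a `D`-regular graph. -/
noncomputable def mu (G : SimpleGraph V) (D : ℕ) (x : V) : V → ℝ :=
  fun v => if G.dist x v ≤ 1 then 1 / (D + 1) else 0

/-- The L¹-Wasserstein distance between `μ_x` and `μ_y`, as an infimum over transport plans. -/
noncomputable def W1 (G : SimpleGraph V) [Fintype V] (D : ℕ) (x y : V) : ℝ :=
  sInf { c : ℝ | ∃ π : V → V → ℝ,
    (∀ u v, 0 ≤ π u v) ∧
    (∀ u, ∑ v, π u v = mu G D x u) ∧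
    (∀ v, ∑ u, π u v = mu G D y v) ∧
    c = ∑ u, ∑ v, (G.dist u v : ℝ) * π u v }

/-- Ollivier Ricci curvature (Lin–Lu–Yau normalization for regular graphs). -/
noncomputable def kappa (G : SimpleGraph V) [Fintype V] (D : ℕ) (x y : V) : ℝ :=
  ((D + 1) / D) * (1 - W1 G D x y)

/-- `G` is Bonnet–Myers sharp: the infimum of the curvature over edges equals `2 / L`. -/
def BMSharp (G : SimpleGraph V) [Fintype V] (D L : ℕ) : Prop :=
  sInf { k : ℝ | ∃ x y, G.Adj x y ∧ k = kappa G D x y } = 2 / (L : ℝ)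

/-- Number of neighbors of `y` at distance `k` from `x0`. -/
noncomputable def sphDeg (G : SimpleGraph V) [Fintype V] (x0 y : V) (k : ℕ) : ℕ :=
  (Finset.univ.filter (fun v => G.Adj y v ∧ G.dist x0 v = k)).card

/-- Number of triangles containing the edge `x ~ y` (common neighbors of `x` and `y`). -/
noncomputable def tri (G : SimpleGraph V) [Fintype V] (x y : V) : ℕ :=
  (Finset.univ.filter (fun v => G.Adj x v ∧ G.Adj y v)).card

/-- A good optimal transport map from `B_1(a)` to `B_1(b)`: a bijection between the 1-balls,
fixing exactly the vertices of `B_1(a) ∩ B_1(b)` (among the domain), whose cost realizes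
the Wasserstein distance `W1 (μ_a, μ_b)`. -/
def goodMap (G : SimpleGraph V) [Fintype V] (D : ℕ) (a b : V) (T : V → V) : Prop :=
  Set.BijOn T {v | G.dist a v ≤ 1} {v | G.dist b v ≤ 1} ∧
  (∀ v, G.dist a v ≤ 1 → (T v = v ↔ G.dist b v ≤ 1)) ∧
  (1 / (D + 1 : ℝ)) *
      ∑ v ∈ Finset.univ.filter (fun v => G.dist a v ≤ 1), (G.dist v (T v) : ℝ) =
    W1 G D a b


/-- Composition `T^j = T_{j-1} ∘ ⋯ ∘ T_0` of the transport maps (`iterT T 0 = id`). -/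
def iterT (T : ℕ → V → V) : ℕ → V → V
  | 0 => id
  | n + 1 => T n ∘ iterT T n

/-!
Push the whole ball `B₁(x₀)` along the transport maps. By Bonnet–Myers sharpness each step
costs at most `D + 1 - 2D/L`, so the paths `z, T¹z, …, Tᴸz` (`z ∈ B₁(x₀)`) have total length
at most `L(D + 1) - 2D`. Each path is at least as long as its gain `d(x₀, Tᴸz) - d(x₀, z)`, and
since `Tᴸ` maps `B₁(x₀)` onto `B₁(x_L)` with `d(x₀, x_L) = L`, the gains add up to at least
`L(D + 1) - 2D`. So no step loses anything: every triangle inequality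
`d(x₀, Tᵏ⁺¹z) ≤ d(x₀, Tᵏz) + d(Tᵏz, Tᵏ⁺¹z)` is an equality.
-/

section

variable {G : SimpleGraph V} {L : ℕ}

lemma _root_.SimpleGraph.Connected.dist_le_one_iff (hconn : G.Connected) {y v : V} :
    G.dist y v ≤ 1 ↔ v = y ∨ G.Adj y v := by
  rw [← Nat.cast_le_one (α := ℕ∞), (hconn y v).coe_dist_eq_edist,
    SimpleGraph.edist_le_one_iff_adj_or_eq, eq_comm, or_comm]

lemma dist_le_sub_of_adj_succ (hconn : G.Connected) {x : ℕ → V} {a b : ℕ}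
    (hadj : ∀ i, a ≤ i → i < b → G.Adj (x i) (x (i + 1))) (hab : a ≤ b) :
    G.dist (x a) (x b) ≤ b - a := by
  induction b, hab using Nat.le_induction with
  | base => simp
  | succ b hab ih =>
    have hstep := SimpleGraph.dist_eq_one_iff_adj.mpr (hadj b hab b.lt_succ_self)
    have htri : G.dist (x a) (x (b + 1)) ≤ G.dist (x a) (x b) + G.dist (x b) (x (b + 1)) :=
      hconn.dist_triangle
    have := ih fun i hai hib => hadj i hai (by omega)
    omega

lemma dist_eq_of_adj_succ_of_dist_eq (hconn : G.Connected) {x : ℕ → V}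
    (hadj : ∀ i < L, G.Adj (x i) (x (i + 1))) (hgeo : G.dist (x 0) (x L) = L) {k : ℕ}
    (hk : k ≤ L) : G.dist (x 0) (x k) = k := by
  have h0k := dist_le_sub_of_adj_succ hconn (a := 0) (fun i _ hi => hadj i (by omega)) k.zero_le
  have hkL := dist_le_sub_of_adj_succ hconn (fun i _ hi => hadj i hi) hk
  have htri : G.dist (x 0) (x L) ≤ G.dist (x 0) (x k) + G.dist (x k) (x L) := hconn.dist_triangle
  omega

lemma dist_add_dist_eq_of_sum_dist_le (hconn : G.Connected) {ι : Type*} {s : Finset ι}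
    {w : ι → ℕ → V} {n : ℕ} (p : V)
    (h : ∑ i ∈ s, ∑ k ∈ range n, (G.dist (w i k) (w i (k + 1)) : ℝ) ≤
      ∑ i ∈ s, ((G.dist p (w i n) : ℝ) - G.dist p (w i 0)))
    {i : ι} (hi : i ∈ s) {k : ℕ} (hk : k < n) :
    G.dist p (w i k) + G.dist (w i k) (w i (k + 1)) = G.dist p (w i (k + 1)) := by
  set defect : ι → ℕ → ℝ := fun i k =>
    G.dist (w i k) (w i (k + 1)) + (G.dist p (w i k) - G.dist p (w i (k + 1)))
  have hnonneg : ∀ i k, 0 ≤ defect i k := fun i k => by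
    have htri : G.dist p (w i (k + 1)) ≤ G.dist p (w i k) + G.dist (w i k) (w i (k + 1)) :=
      hconn.dist_triangle
    have : (G.dist p (w i (k + 1)) : ℝ) ≤ G.dist p (w i k) + G.dist (w i k) (w i (k + 1)) := by
      exact_mod_cast htri
    simp only [defect]
    linarith
  have htotal : ∑ i ∈ s, ∑ k ∈ range n, defect i k = 0 := by
    refine le_antisymm ?_ (sum_nonneg fun i _ => sum_nonneg fun k _ => hnonneg i k)
    have htele : ∀ i, ∑ k ∈ range n, defect i k = ∑ k ∈ range n,
        (G.dist (w i k) (w i (k + 1)) : ℝ) + (G.dist p (w i 0) - G.dist p (w i n)) := fun i => by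
      rw [sum_add_distrib, sum_range_sub' fun k => (G.dist p (w i k) : ℝ)]
    rw [sum_congr rfl fun i _ => htele i, sum_add_distrib, sum_sub_distrib]
    rw [sum_sub_distrib] at h
    linarith
  have hik := (sum_eq_zero_iff_of_nonneg fun k _ => hnonneg i k).mp
    ((sum_eq_zero_iff_of_nonneg fun i _ => sum_nonneg fun k _ => hnonneg i k).mp htotal i hi)
    k (mem_range.mpr hk)
  simp only [defect] at hik
  exact_mod_cast (by linarith : (G.dist p (w i k) : ℝ) + G.dist (w i k) (w i (k + 1)) =
    G.dist p (w i (k + 1)))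

lemma iterT_bijOn {T : ℕ → V → V} {s : ℕ → Set V} {k : ℕ}
    (hT : ∀ j < k, Set.BijOn (T j) (s j) (s (j + 1))) : Set.BijOn (iterT T k) (s 0) (s k) := by
  induction k with
  | zero => exact Set.bijOn_id _
  | succ k ih => exact (hT k k.lt_succ_self).comp (ih fun j hj => hT j (by omega))

end

section

variable [Fintype V] {G : SimpleGraph V} {D L : ℕ}

noncomputable def unitBall (G : SimpleGraph V) (y : V) : Finset V :=
  univ.filter fun v => G.dist y v ≤ 1

lemma mem_unitBall {y v : V} : v ∈ unitBall G y ↔ G.dist y v ≤ 1 := by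
  simp [unitBall]

lemma coe_unitBall (y : V) : (unitBall G y : Set V) = {v | G.dist y v ≤ 1} := by
  ext; exact mem_unitBall

lemma unitBall_eq_insert_neighborFinset (hconn : G.Connected) (y : V) :
    unitBall G y = insert y (G.neighborFinset y) := by
  ext v
  simp [mem_unitBall, hconn.dist_le_one_iff]

lemma sum_unitBall_dist_self (hconn : G.Connected) (y : V) :
    ∑ v ∈ unitBall G y, G.dist y v = G.degree y := by
  rw [unitBall_eq_insert_neighborFinset hconn, sum_insert (by simp), SimpleGraph.dist_self,
    zero_add, sum_congr rfl fun v hv => SimpleGraph.dist_eq_one_iff_adj.mpr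
      ((G.mem_neighborFinset y v).mp hv), sum_const, G.card_neighborFinset_eq_degree,
    smul_eq_mul, mul_one]

lemma le_sum_unitBall_dist (hconn : G.Connected) (p y : V) :
    G.degree y * ((G.dist p y : ℝ) - 1) + G.dist p y ≤ ∑ v ∈ unitBall G y, (G.dist p v : ℝ) := by
  rw [unitBall_eq_insert_neighborFinset hconn, sum_insert (by simp), add_comm]
  gcongr
  rw [← G.card_neighborFinset_eq_degree, ← nsmul_eq_mul]
  refine card_nsmul_le_sum _ _ _ fun w hw => ?_
  have hpy : G.dist p y ≤ G.dist p w + G.dist w y := hconn.dist_triangle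
  rw [SimpleGraph.dist_eq_one_iff_adj.mpr ((G.mem_neighborFinset y w).mp hw).symm] at hpy
  rw [sub_le_iff_le_add]
  exact_mod_cast hpy

lemma sum_unitBall_comp_of_bijOn {f : V → V} {a b : V}
    (hf : Set.BijOn f {v | G.dist a v ≤ 1} {v | G.dist b v ≤ 1}) (g : V → ℝ) :
    ∑ z ∈ unitBall G a, g (f z) = ∑ v ∈ unitBall G b, g v := by
  rw [← coe_unitBall, ← coe_unitBall] at hf
  exact sum_nbij f (fun _ hz => hf.mapsTo hz) hf.injOn hf.surjOn fun _ _ => rfl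

lemma two_div_le_kappa (hBM : BMSharp G D L) {a b : V} (hab : G.Adj a b) :
    2 / (L : ℝ) ≤ kappa G D a b := by
  have hfin : {k : ℝ | ∃ x y, G.Adj x y ∧ k = kappa G D x y}.Finite :=
    (Set.finite_range fun p : V × V => kappa G D p.1 p.2).subset
      fun _ ⟨u, w, _, hk⟩ => ⟨(u, w), hk.symm⟩
  exact hBM ▸ csInf_le hfin.bddBelow ⟨a, b, hab, rfl⟩

lemma goodMap.sum_dist_le {a b : V} {T : V → V} (hT : goodMap G D a b T)
    (hreg : G.IsRegularOfDegree D) (hBM : BMSharp G D L) (hab : G.Adj a b) :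
    ∑ v ∈ unitBall G a, (G.dist v (T v) : ℝ) ≤ D + 1 - 2 * D / L := by
  have hD : (0 : ℝ) < D := by
    exact_mod_cast hreg a ▸ (G.degree_pos_iff_exists_adj a).mpr ⟨b, hab⟩
  have hsum : ∑ v ∈ unitBall G a, (G.dist v (T v) : ℝ) = (D + 1) * W1 G D a b := by
    rw [← hT.2.2, unitBall]
    field_simp
  have hkappa : 2 * D / L ≤ (D + 1) * (1 - W1 G D a b) :=
    calc 2 * D / (L : ℝ) = D * (2 / L) := by ring
      _ ≤ D * kappa G D a b := by gcongr; exact two_div_le_kappa hBM hab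
      _ = (D + 1) * (1 - W1 G D a b) := by unfold kappa; field_simp
  linarith

lemma dist_add_dist_iterT_succ (hconn : G.Connected) (hreg : G.IsRegularOfDegree D)
    (hBM : BMSharp G D L) {x : ℕ → V} (hadj : ∀ j < L, G.Adj (x j) (x (j + 1)))
    (hgeo : G.dist (x 0) (x L) = L) {T : ℕ → V → V}
    (hT : ∀ j < L, goodMap G D (x j) (x (j + 1)) (T j)) {k : ℕ} (hk : k < L) {z : V}
    (hz : G.dist (x 0) z ≤ 1) :
    G.dist (x 0) (iterT T k z) + G.dist (iterT T k z) (iterT T (k + 1) z) =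
      G.dist (x 0) (iterT T (k + 1) z) := by
  have hbij : ∀ j ≤ L,
      Set.BijOn (iterT T j) {v | G.dist (x 0) v ≤ 1} {v | G.dist (x j) v ≤ 1} :=
    fun j hj => iterT_bijOn fun i hi => (hT i (by omega)).1
  have hL : (L : ℝ) ≠ 0 := by exact_mod_cast (by omega : L ≠ 0)
  have hcost : ∑ z ∈ unitBall G (x 0), ∑ j ∈ range L,
      (G.dist (iterT T j z) (iterT T (j + 1) z) : ℝ) ≤ L * (D + 1) - 2 * D := by
    rw [sum_comm]
    calc _ ≤ ∑ j ∈ range L, ((D : ℝ) + 1 - 2 * D / L) := sum_le_sum fun j hj => by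
            have hj := mem_range.mp hj
            exact (sum_unitBall_comp_of_bijOn (hbij j hj.le) fun v => (G.dist v (T j v) : ℝ))
              |>.trans_le ((hT j hj).sum_dist_le hreg hBM (hadj j hj))
      _ = L * (D + 1) - 2 * D := by
            rw [sum_const, card_range, nsmul_eq_mul]
            field_simp
  have hgain : L * (D + 1) - 2 * D ≤ ∑ z ∈ unitBall G (x 0),
      ((G.dist (x 0) (iterT T L z) : ℝ) - G.dist (x 0) (iterT T 0 z)) := by
    have hfar := le_sum_unitBall_dist hconn (x 0) (x L)
    have hnear : ∑ z ∈ unitBall G (x 0), (G.dist (x 0) z : ℝ) = D := by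
      exact_mod_cast (sum_unitBall_dist_self hconn (x 0)).trans (hreg _)
    rw [hreg, hgeo] at hfar
    rw [sum_sub_distrib, sum_unitBall_comp_of_bijOn (hbij L le_rfl) fun v => (G.dist (x 0) v : ℝ)]
    simp only [iterT, id, hnear]
    linarith
  exact dist_add_dist_eq_of_sum_dist_le hconn (x 0) (w := fun z j => iterT T j z)
    (hcost.trans hgain) (mem_unitBall.mpr hz) hk

end

theorem stmt_general [Fintype V] (G : SimpleGraph V) (hconn : G.Connected)
    (D L : ℕ) (hreg : G.IsRegularOfDegree D)
    (hBM : BMSharp G D L)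
    (x : ℕ → V)
    (hadj : ∀ j < L, G.Adj (x j) (x (j + 1)))
    (hgeo : G.dist (x 0) (x L) = L)
    (T : ℕ → V → V) (hT : ∀ j < L, goodMap G D (x j) (x (j + 1)) (T j))
    (j : ℕ) (hj1 : 1 ≤ j) (hjL : j ≤ L)
    (z v : V) (hz : G.dist (x 0) z ≤ 1) (hv : v = iterT T (j - 1) z)
    (m n : ℕ) (hm : G.dist (x 0) v = m) (hn : G.dist (x 0) (T (j - 1) v) = n) :
    G.dist (x 0) v + G.dist v (T (j - 1) v) = G.dist (x 0) (T (j - 1) v) ∧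
    (j : ℤ) - 2 ≤ (m : ℤ) ∧ m ≤ n ∧ n ≤ j + 1 ∧
    G.dist v (T (j - 1) v) = n - m ∧
    (n = m ↔ T (j - 1) v = v) ∧
    (n = m + 1 ↔ G.Adj v (T (j - 1) v)) := by
  obtain ⟨k, rfl⟩ : ∃ k, j = k + 1 := ⟨j - 1, by omega⟩
  rw [Nat.add_sub_cancel] at hv hn ⊢
  have hgeod : G.dist (x 0) v + G.dist v (T k v) = G.dist (x 0) (T k v) := by
    subst hv
    exact dist_add_dist_iterT_succ hconn hreg hBM hadj hgeo hT (by omega) hz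
  have hvk : G.dist (x k) v ≤ 1 :=
    hv ▸ (iterT_bijOn fun i hi => (hT i (by omega)).1).mapsTo hz
  have hTv : G.dist (x (k + 1)) (T k v) ≤ 1 := (hT k (by omega)).1.mapsTo hvk
  have hxk := dist_eq_of_adj_succ_of_dist_eq hconn hadj hgeo (k := k) (by omega)
  have hxk1 := dist_eq_of_adj_succ_of_dist_eq hconn hadj hgeo (k := k + 1) hjL
  have hlow : G.dist (x 0) (x k) ≤ G.dist (x 0) v + G.dist v (x k) := hconn.dist_triangle
  rw [SimpleGraph.dist_comm] at hvk
  have hup : G.dist (x 0) (T k v) ≤ G.dist (x 0) (x (k + 1)) + G.dist (x (k + 1)) (T k v) :=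
    hconn.dist_triangle
  have hfix : T k v = v ↔ G.dist v (T k v) = 0 := by rw [hconn.dist_eq_zero_iff, eq_comm]
  refine ⟨hgeod, by omega, by omega, by omega, by omega, by rw [hfix]; omega, ?_⟩
  rw [← SimpleGraph.dist_eq_one_iff_adj]
  omega

theorem stmt [Fintype V] (G : SimpleGraph V) (hconn : G.Connected)
    (D L : ℕ) (hD : 0 < D) (hL : 0 < L) (hreg : G.IsRegularOfDegree D)
    (hdiam : G.diam = L) (hBM : BMSharp G D L)
    (x : ℕ → V) (hpole : ∃ p, G.dist (x 0) p = L)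
    (hadj : ∀ j < L, G.Adj (x j) (x (j + 1)))
    (hgeo : G.dist (x 0) (x L) = L)
    (T : ℕ → V → V) (hT : ∀ j < L, goodMap G D (x j) (x (j + 1)) (T j))
    (j : ℕ) (hj1 : 1 ≤ j) (hjL : j ≤ L)
    (z v : V) (hz : G.dist (x 0) z ≤ 1) (hv : v = iterT T (j - 1) z)
    (m n : ℕ) (hm : G.dist (x 0) v = m) (hn : G.dist (x 0) (T (j - 1) v) = n) :
    G.dist (x 0) v + G.dist v (T (j - 1) v) = G.dist (x 0) (T (j - 1) v) ∧
    (j : ℤ) - 2 ≤ (m : ℤ) ∧ m ≤ n ∧ n ≤ j + 1 ∧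
    G.dist v (T (j - 1) v) = n - m ∧
    (n = m ↔ T (j - 1) v = v) ∧
    (n = m + 1 ↔ G.Adj v (T (j - 1) v)) :=
  stmt_general G hconn D L hreg hBM x hadj hgeo T hT j hj1 hjL z v hz hv m n hm hn

end BMS
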